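/- Let n be a natural number with n ≡ 3 (mod 8). Then n belongs to B if and only if the number of triples (a,b,c) of nonnegative integers with n = a² + 2b² + 8c² is odd. -/

import Mathlib

open PowerSeries

/-- `g = ∑_{n ≥ 0} x^{n²}` in `(ℤ/2ℤ)[[x]]`: the coefficient of `x^m` is `1`
exactly when `m` is a perfect square. -/
noncomputable def g : PowerSeries (ZMod 2) :=
  PowerSeries.mk fun m => if IsSquare m then 1 else 0

/-- `B` is the set of `n` for which the coefficient of `x^n` in `1/g` equals `1`. -/
noncomputable def B : Set ℕ := {n | PowerSeries.coeff n g⁻¹ = 1}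

/-!
Over `𝔽₂` we have `f(x)² = f(x²)`, so `g² = ∑ x^{2b²}`, `g⁸ = ∑ x^{8c²}`, and the coefficient of
`x^n` in `g · g² · g⁸` is the parity of the number of representations `n = a² + 2b² + 8c²`.
Put `D = 1/g + g²`; then `1/g + g¹¹ = g³ D⁴` and `D = (g³ + g⁶) / g⁴`. Since `a² + 2b² = 2l`
forces `a` to be even, the even part of `g³ = ∑ x^{a² + 2b²}` is `g⁶`, so `D` has only odd
exponents and `D⁴` only exponents `≡ 4 (mod 8)`. As `a² + 2b² ≢ 7 (mod 8)`, the product `g³ D⁴`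
has no term `x^n` with `n ≡ 3 (mod 8)`.
-/

open Finset

/-- The generating series `∑ₓ X^(d x)`. Meant for `d` with finite fibers: `Nat.card` of an
infinite fiber is `0`. -/
noncomputable def genSeries (R : Type*) [Semiring R] {α : Type*} (d : α → ℕ) : R⟦X⟧ :=
  mk fun n => (Nat.card {x // d x = n} : R)

section GenSeries

variable {R : Type*} [Semiring R] {α β : Type*}

theorem coeff_genSeries (d : α → ℕ) (n : ℕ) :
    coeff n (genSeries R d) = Nat.card {x // d x = n} :=
  coeff_mk _ _

def fiberAddEquiv (d₁ : α → ℕ) (d₂ : β → ℕ) (n : ℕ) :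
    {x : α × β // d₁ x.1 + d₂ x.2 = n} ≃
      Σ p : antidiagonal n, {a // d₁ a = p.1.1} × {b // d₂ b = p.1.2} where
  toFun x := ⟨⟨(d₁ x.1.1, d₂ x.1.2), mem_antidiagonal.2 x.2⟩, ⟨x.1.1, rfl⟩, ⟨x.1.2, rfl⟩⟩
  invFun y := ⟨(y.2.1, y.2.2), by rw [y.2.1.2, y.2.2.2]; exact mem_antidiagonal.1 y.1.2⟩
  left_inv _ := rfl
  right_inv := by
    rintro ⟨⟨⟨i, j⟩, hij⟩, ⟨a, ha⟩, ⟨b, hb⟩⟩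
    dsimp only at ha hb
    subst ha hb
    rfl

theorem finite_fiber_add {d₁ : α → ℕ} {d₂ : β → ℕ} (h₁ : ∀ n, Finite {a // d₁ a = n})
    (h₂ : ∀ n, Finite {b // d₂ b = n}) (n : ℕ) :
    Finite {x : α × β // d₁ x.1 + d₂ x.2 = n} :=
  .of_equiv _ (fiberAddEquiv d₁ d₂ n).symm

theorem finite_fiber_of_injective {d : α → ℕ} (hd : Function.Injective d) (n : ℕ) :
    Finite {x // d x = n} :=
  have : Subsingleton {x // d x = n} := ⟨fun x y => Subtype.ext (hd (x.2.trans y.2.symm))⟩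
  inferInstance

theorem genSeries_mul {d₁ : α → ℕ} {d₂ : β → ℕ} (h₁ : ∀ n, Finite {a // d₁ a = n})
    (h₂ : ∀ n, Finite {b // d₂ b = n}) :
    genSeries R d₁ * genSeries R d₂ = genSeries R fun x : α × β => d₁ x.1 + d₂ x.2 := by
  ext n
  rw [coeff_mul, coeff_genSeries, Nat.card_congr (fiberAddEquiv d₁ d₂ n), Nat.card_sigma,
    ← sum_coe_sort]
  simp only [coeff_genSeries, Nat.card_prod, Nat.cast_sum, Nat.cast_mul]

theorem coeff_mul_eq_zero_of_forall {f h : R⟦X⟧} {n : ℕ}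
    (hfh : ∀ i j, i + j = n → coeff i f = 0 ∨ coeff j h = 0) : coeff n (f * h) = 0 := by
  rw [coeff_mul]
  refine sum_eq_zero fun x hx => ?_
  rcases hfh x.1 x.2 (mem_antidiagonal.1 hx) with hf | hh
  · rw [hf, zero_mul]
  · rw [hh, mul_zero]

end GenSeries

section Expand

variable {R : Type*} [CommRing R]

theorem expand_genSeries {α : Type*} (p : ℕ) (hp : p ≠ 0) (d : α → ℕ) :
    expand p hp (genSeries R d) = genSeries R fun x => p * d x := by
  ext n
  rw [coeff_expand, coeff_genSeries]
  split_ifs with h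
  · obtain ⟨m, rfl⟩ := h
    rw [coeff_genSeries, Nat.mul_div_cancel_left _ (Nat.pos_of_ne_zero hp)]
    exact congrArg _ (Nat.card_congr (Equiv.subtypeEquivRight fun x => by simp [hp]))
  · have : IsEmpty {x // p * d x = n} := ⟨fun x => h ⟨d x.1, x.2.symm⟩⟩
    rw [coeff_genSeries, Nat.card_of_isEmpty, Nat.cast_zero]

theorem coeff_mul_mul_expand_eq_zero {p : ℕ} (hp : p ≠ 0) {f : R⟦X⟧}
    (hf : ∀ m, coeff (p * m) f = 0) (h : R⟦X⟧) (m : ℕ) :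
    coeff (p * m) (f * expand p hp h) = 0 := by
  refine coeff_mul_eq_zero_of_forall fun i j hij => ?_
  by_cases hj : p ∣ j
  · obtain ⟨k, rfl⟩ := (Nat.dvd_add_left hj).1 (hij ▸ dvd_mul_right p m)
    exact .inl (hf k)
  · exact .inr (coeff_expand_of_not_dvd p hp h hj)

end Expand

theorem sq_eq_expand_two (f : (ZMod 2)⟦X⟧) : f ^ 2 = expand 2 two_ne_zero f := by
  have := MvPowerSeries.map_frobenius_expand (R := ZMod 2) 2 two_ne_zero (f := f)
  rw [ZMod.frobenius_zmod, MvPowerSeries.map_id] at this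
  exact this.symm

theorem pow_four_eq_expand_four (f : (ZMod 2)⟦X⟧) : f ^ 4 = expand 4 four_ne_zero f := by
  rw [show f ^ 4 = (f ^ 2) ^ 2 by ring, sq_eq_expand_two, sq_eq_expand_two, ← expand_mul]

theorem add_pow_four (f h : (ZMod 2)⟦X⟧) : (f + h) ^ 4 = f ^ 4 + h ^ 4 := by
  simp only [pow_four_eq_expand_four, map_add]

theorem even_of_sq_add_two_mul_sq_eq_two_mul {a b l : ℕ} (h : a ^ 2 + 2 * b ^ 2 = 2 * l) :
    Even a :=
  (Nat.even_pow' two_ne_zero).1 ⟨l - b ^ 2, by omega⟩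

def sqAddTwoMulSqHalveEquiv (l : ℕ) :
    {x : ℕ × ℕ // x.1 ^ 2 + 2 * x.2 ^ 2 = 2 * l} ≃ {x : ℕ × ℕ // x.1 ^ 2 + 2 * x.2 ^ 2 = l} where
  toFun x := ⟨(x.1.2, x.1.1 / 2), by
    obtain ⟨⟨a, b⟩, h⟩ := x
    obtain ⟨c, rfl⟩ := even_of_sq_add_two_mul_sq_eq_two_mul h
    dsimp only at h ⊢
    rw [← two_mul, Nat.mul_div_cancel_left _ two_pos]
    nlinarith⟩
  invFun y := ⟨(2 * y.1.2, y.1.1), by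
    obtain ⟨⟨c, d⟩, h⟩ := y
    dsimp only at h ⊢
    rw [← h]
    ring⟩
  left_inv := by
    rintro ⟨⟨a, b⟩, h⟩
    obtain ⟨c, rfl⟩ := even_of_sq_add_two_mul_sq_eq_two_mul h
    exact Subtype.ext (Prod.ext (by dsimp only; omega) rfl)
  right_inv _ := Subtype.ext (Prod.ext rfl (by dsimp only; omega))

theorem sq_add_two_mul_sq_mod_eight_ne_seven (a b : ℕ) : (a ^ 2 + 2 * b ^ 2) % 8 ≠ 7 := by
  intro h
  have key : ∀ x y : ZMod 8, x ^ 2 + 2 * y ^ 2 ≠ 7 := by decide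
  apply key a b
  have := ZMod.natCast_mod (a ^ 2 + 2 * b ^ 2) 8
  rw [h] at this
  exact_mod_cast this.symm

theorem g_eq_genSeries : g = genSeries (ZMod 2) fun a : ℕ => a ^ 2 := by
  ext m
  rw [g, coeff_mk, coeff_genSeries]
  split_ifs with h
  · obtain ⟨r, rfl⟩ := h
    rw [Nat.card_eq_one_iff_exists.2 ⟨⟨r, sq r⟩, fun y =>
      Subtype.ext (Nat.pow_left_injective two_ne_zero (y.2.trans (sq r).symm))⟩, Nat.cast_one]
  · have : IsEmpty {a // a ^ 2 = m} := ⟨fun a => h ⟨a.1, a.2.symm.trans (sq _)⟩⟩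
    rw [Nat.card_of_isEmpty, Nat.cast_zero]

theorem finite_fiber_mul_sq {k : ℕ} (hk : k ≠ 0) (n : ℕ) : Finite {a : ℕ // k * a ^ 2 = n} :=
  finite_fiber_of_injective (fun _ _ h => Nat.pow_left_injective two_ne_zero
    (Nat.eq_of_mul_eq_mul_left (Nat.pos_of_ne_zero hk) h)) n

theorem g_mul_g_sq : g * g ^ 2 = genSeries (ZMod 2) fun x : ℕ × ℕ => x.1 ^ 2 + 2 * x.2 ^ 2 := by
  rw [sq_eq_expand_two, g_eq_genSeries, expand_genSeries, genSeries_mul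
    (finite_fiber_of_injective (Nat.pow_left_injective two_ne_zero))
    (finite_fiber_mul_sq two_ne_zero)]

theorem g_pow_eight : g ^ 8 = genSeries (ZMod 2) fun c : ℕ => 8 * c ^ 2 := by
  rw [show g ^ 8 = (g ^ 4) ^ 2 by ring, sq_eq_expand_two, pow_four_eq_expand_four, ← expand_mul,
    g_eq_genSeries, expand_genSeries]

theorem g_mul_g_sq_mul_g_pow_eight : g * g ^ 2 * g ^ 8 =
    genSeries (ZMod 2) fun t : (ℕ × ℕ) × ℕ => t.1.1 ^ 2 + 2 * t.1.2 ^ 2 + 8 * t.2 ^ 2 := by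
  rw [g_mul_g_sq, g_pow_eight, genSeries_mul (finite_fiber_add
    (finite_fiber_of_injective (Nat.pow_left_injective two_ne_zero))
    (finite_fiber_mul_sq two_ne_zero)) (finite_fiber_mul_sq (by norm_num))]

theorem coeff_g_mul_g_sq_two_mul (l : ℕ) : coeff (2 * l) (g * g ^ 2) = coeff l (g * g ^ 2) := by
  rw [g_mul_g_sq, coeff_genSeries, coeff_genSeries, Nat.card_congr (sqAddTwoMulSqHalveEquiv l)]

theorem coeff_g_mul_g_sq_of_mod_eight {i : ℕ} (hi : i % 8 = 7) : coeff i (g * g ^ 2) = 0 := by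
  have : IsEmpty {x : ℕ × ℕ // x.1 ^ 2 + 2 * x.2 ^ 2 = i} :=
    ⟨fun x => sq_add_two_mul_sq_mod_eight_ne_seven _ _ (x.2 ▸ hi)⟩
  rw [g_mul_g_sq, coeff_genSeries, Nat.card_of_isEmpty, Nat.cast_zero]

theorem g_mul_inv : g * g⁻¹ = 1 := by
  refine PowerSeries.mul_inv_cancel _ ?_
  simp [g]

theorem coeff_two_mul_inv_add_sq (m : ℕ) : coeff (2 * m) (g⁻¹ + g ^ 2) = 0 := by
  have key : g⁻¹ + g ^ 2 = (g * g ^ 2 + (g * g ^ 2) ^ 2) * (g⁻¹ ^ 2) ^ 2 := by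
    linear_combination (-(g⁻¹ * ((g * g⁻¹) ^ 2 + g * g⁻¹ + 1)) -
      g ^ 2 * (g * g⁻¹ + 1) * ((g * g⁻¹) ^ 2 + 1)) * g_mul_inv
  rw [key, sq_eq_expand_two (g⁻¹ ^ 2)]
  refine coeff_mul_mul_expand_eq_zero _ (fun k => ?_) _ m
  rw [map_add, sq_eq_expand_two (g * g ^ 2), coeff_expand_mul, coeff_g_mul_g_sq_two_mul,
    CharTwo.add_self_eq_zero]

theorem coeff_g_inv_eq_of_mod_eight_eq_three {n : ℕ} (hn : n % 8 = 3) :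
    coeff n g⁻¹ = coeff n (g * g ^ 2 * g ^ 8) := by
  have key : g⁻¹ + g * g ^ 2 * g ^ 8 = g * g ^ 2 * (g⁻¹ + g ^ 2) ^ 4 := by
    rw [add_pow_four]
    linear_combination (-(g⁻¹ * ((g * g⁻¹) ^ 2 + g * g⁻¹ + 1))) * g_mul_inv
  have vanish : coeff n (g * g ^ 2 * (g⁻¹ + g ^ 2) ^ 4) = 0 := by
    rw [pow_four_eq_expand_four]
    refine coeff_mul_eq_zero_of_forall fun i j hij => ?_
    by_cases hj : 4 ∣ j
    · obtain ⟨m, rfl⟩ := hj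
      rcases Nat.even_or_odd' m with ⟨k, rfl | rfl⟩
      · exact .inr (by rw [coeff_expand_mul, coeff_two_mul_inv_add_sq])
      · exact .inl (coeff_g_mul_g_sq_of_mod_eight (by omega))
    · exact .inr (coeff_expand_of_not_dvd _ _ _ hj)
  rw [← CharTwo.add_eq_zero, ← map_add, key, vanish]

theorem stmt3 (n : ℕ) (hn : n % 8 = 3) :
    n ∈ B ↔
      Odd (Nat.card {t : ℕ × ℕ × ℕ // n = t.1 ^ 2 + 2 * t.2.1 ^ 2 + 8 * t.2.2 ^ 2}) := by
  have count : coeff n (g * g ^ 2 * g ^ 8) =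
      (Nat.card {t : ℕ × ℕ × ℕ // n = t.1 ^ 2 + 2 * t.2.1 ^ 2 + 8 * t.2.2 ^ 2} : ZMod 2) := by
    rw [g_mul_g_sq_mul_g_pow_eight, coeff_genSeries]
    exact congrArg _ (Nat.card_congr ((Equiv.prodAssoc ℕ ℕ ℕ).subtypeEquiv fun _ => eq_comm))
  change coeff n g⁻¹ = 1 ↔ _
  rw [coeff_g_inv_eq_of_mod_eight_eq_three hn, count, ZMod.natCast_eq_one_iff_odd]
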